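/- The assignment P(R = k) = s_k (3 − 2√2)^k / (√2 − 1) for k ≥ 1 defines a probability distribution on the positive integers, i.e., ∑_{k=1}^∞ s_k (3 − 2√2)^k = √2 − 1. -/

import Mathlib

/-!
A separable permutation of size at least two is a direct sum or a skew sum, never both, and
complementation `i ↦ n - 1 - σ i` exchanges the two kinds. Cutting a direct sum at its smallest
cut writes it uniquely as `α ⊕ β` with `α` sum-indecomposable, and both blocks of a separable
direct sum are separable. Counting with these facts gives
`s (n + 2) = s (n + 1) + ∑_{k ≤ n} s (k + 1) s (n + 1 - k)`.

For `x = 3 - 2√2` the weights `b n = s (n + 1) x ^ (n + 1)` thus satisfy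
`b (n + 1) = x b n + ∑_{k ≤ n} b k b (n - k)`. By induction the partial sums stay below
`L = √2 - 1`, a fixed point of `t ↦ x + x t + t²`, so the series converges, and by the Cauchy
product its sum `S` satisfies `S = x + x S + S²`. At this `x` the quadratic has the double root
`L`, hence `S = L`.
-/

open Equiv Finset Filter Topology

/-- Direct sum of permutations: `(σ⊕τ)(i)=σ(i)` for `i<k`, `(σ⊕τ)(k+i)=k+τ(i)`. -/
def directSum {k l : ℕ} (σ : Equiv.Perm (Fin k)) (τ : Equiv.Perm (Fin l)) :
    Equiv.Perm (Fin (k + l)) :=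
  finSumFinEquiv.symm.trans ((Equiv.sumCongr σ τ).trans finSumFinEquiv)

/-- Skew sum of permutations: `(σ⊖τ)(i)=σ(i)+l` for `i<k`, `(σ⊖τ)(k+i)=τ(i)`. -/
def skewSum {k l : ℕ} (σ : Equiv.Perm (Fin k)) (τ : Equiv.Perm (Fin l)) :
    Equiv.Perm (Fin (k + l)) :=
  finSumFinEquiv.symm.trans ((Equiv.sumCongr σ τ).trans
    ((Equiv.sumComm (Fin k) (Fin l)).trans (finSumFinEquiv.trans (finCongr (Nat.add_comm l k)))))

/-- A permutation is separable if it is the singleton or a direct or skew sum of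
two separable permutations. -/
inductive Separable : {n : ℕ} → Equiv.Perm (Fin n) → Prop where
  | single : Separable (Equiv.refl (Fin 1))
  | dsum {k l : ℕ} {σ : Equiv.Perm (Fin k)} {τ : Equiv.Perm (Fin l)} :
      Separable σ → Separable τ → Separable (directSum σ τ)
  | ssum {k l : ℕ} {σ : Equiv.Perm (Fin k)} {τ : Equiv.Perm (Fin l)} :
      Separable σ → Separable τ → Separable (skewSum σ τ)

/-- `numSep n` = number of separable permutations of `[n]` (denoted `s_n`). -/
noncomputable def numSep (n : ℕ) : ℕ := Nat.card {σ : Equiv.Perm (Fin n) // Separable σ}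

section Basic

variable {k l : ℕ} (α : Perm (Fin k)) (β : Perm (Fin l))

@[simp] lemma directSum_castAdd (i : Fin k) :
    directSum α β (Fin.castAdd l i) = Fin.castAdd l (α i) := by
  simp [directSum]

@[simp] lemma directSum_natAdd (j : Fin l) :
    directSum α β (Fin.natAdd k j) = Fin.natAdd k (β j) := by
  simp [directSum]

@[simp] lemma skewSum_castAdd_val (i : Fin k) :
    (skewSum α β (Fin.castAdd l i) : ℕ) = l + α i := by
  simp [skewSum, Nat.add_comm]

@[simp] lemma skewSum_natAdd_val (j : Fin l) : (skewSum α β (Fin.natAdd k j) : ℕ) = β j := by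
  simp [skewSum]

end Basic

lemma directSum_inj {k l : ℕ} {α α' : Perm (Fin k)} {β β' : Perm (Fin l)} :
    directSum α β = directSum α' β' ↔ α = α' ∧ β = β' := by
  refine ⟨fun h => ⟨?_, ?_⟩, fun ⟨hα, hβ⟩ => hα ▸ hβ ▸ rfl⟩
  · ext i; simpa using congrArg (fun σ => (σ (Fin.castAdd l i) : ℕ)) h
  · ext j; simpa using congrArg (fun σ => (σ (Fin.natAdd k j) : ℕ)) h

def castPerm {m n : ℕ} (h : m = n) : Perm (Fin m) ≃ Perm (Fin n) := (finCongr h).permCongr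

@[simp] lemma castPerm_apply_val {m n : ℕ} (h : m = n) (σ : Perm (Fin m)) (i : Fin n) :
    (castPerm h σ i : ℕ) = σ (Fin.cast h.symm i) := by
  simp [castPerm]

@[simp] lemma castPerm_refl {n : ℕ} (h : n = n) (σ : Perm (Fin n)) : castPerm h σ = σ := by
  ext; simp

@[simp] lemma castPerm_castPerm {m n p : ℕ} (h : m = n) (h' : n = p) (σ : Perm (Fin m)) :
    castPerm h' (castPerm h σ) = castPerm (h.trans h') σ := by
  ext; simp

@[simp] lemma separable_castPerm_iff {m n : ℕ} (h : m = n) {σ : Perm (Fin m)} :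
    Separable (castPerm h σ) ↔ Separable σ := by
  subst h; simp

lemma directSum_assoc {a b c : ℕ} (α : Perm (Fin a)) (β : Perm (Fin b)) (γ : Perm (Fin c)) :
    castPerm (Nat.add_assoc a b c) (directSum (directSum α β) γ) =
      directSum α (directSum β γ) := by
  ext i
  induction i using Fin.addCases with
  | left i =>
    rw [castPerm_apply_val, show Fin.cast _ (Fin.castAdd (b + c) i) =
      Fin.castAdd c (Fin.castAdd b i) from rfl]
    simp
  | right j =>
    induction j using Fin.addCases with
    | left j =>
      rw [castPerm_apply_val, show Fin.cast _ (Fin.natAdd a (Fin.castAdd c j)) =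
        Fin.castAdd c (Fin.natAdd a j) from rfl]
      simp
    | right j =>
      rw [castPerm_apply_val, show Fin.cast _ (Fin.natAdd a (Fin.natAdd b j)) =
        Fin.natAdd (a + b) j from Fin.ext (Nat.add_assoc ..).symm]
      simp [Nat.add_assoc]

lemma Separable.pos {n : ℕ} {σ : Perm (Fin n)} (h : Separable σ) : 0 < n := by
  induction h <;> omega

def Equiv.Perm.complement {n : ℕ} (σ : Perm (Fin n)) : Perm (Fin n) := σ.trans Fin.revPerm

@[simp] lemma complement_apply_val {n : ℕ} (σ : Perm (Fin n)) (i : Fin n) :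
    (σ.complement i : ℕ) = n - 1 - σ i := by
  simp [Perm.complement]; omega

@[simp] lemma complement_complement {n : ℕ} (σ : Perm (Fin n)) :
    σ.complement.complement = σ := by
  ext i; simp [Perm.complement]

lemma complement_skewSum {k l : ℕ} (α : Perm (Fin k)) (β : Perm (Fin l)) :
    (skewSum α β).complement = directSum α.complement β.complement := by
  ext i
  induction i using Fin.addCases with
  | left i => have := (α i).2; simp; omega
  | right j => have := (β j).2; simp; omega

lemma complement_directSum {k l : ℕ} (α : Perm (Fin k)) (β : Perm (Fin l)) :
    (directSum α β).complement = skewSum α.complement β.complement := by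
  simpa using congrArg Perm.complement (complement_skewSum α.complement β.complement).symm

lemma Separable.complement {n : ℕ} {σ : Perm (Fin n)} (h : Separable σ) :
    Separable σ.complement := by
  induction h with
  | single => rw [Subsingleton.elim (Perm.complement _) (Equiv.refl _)]; exact .single
  | dsum _ _ ihα ihβ => rw [complement_directSum]; exact ihα.ssum ihβ
  | ssum _ _ ihα ihβ => rw [complement_skewSum]; exact ihα.dsum ihβ

def SplitsAt {n : ℕ} (σ : Perm (Fin n)) (k : ℕ) : Prop :=
  ∀ i : Fin n, (i : ℕ) < k → (σ i : ℕ) < k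

section SplitsAt

variable {k l : ℕ} (α : Perm (Fin k)) (β : Perm (Fin l))

lemma splitsAt_directSum : SplitsAt (directSum α β) k := by
  intro i hi
  rw [show i = Fin.castAdd l ⟨i, hi⟩ from rfl, directSum_castAdd]
  exact (α _).2

lemma exists_directSum_eq {σ : Perm (Fin (k + l))} (h : SplitsAt σ k) :
    ∃ (α : Perm (Fin k)) (β : Perm (Fin l)), directSum α β = σ := by
  set τ := finSumFinEquiv.symm.permCongr σ
  have hτ : Set.MapsTo τ (Set.range Sum.inl) (Set.range Sum.inl) := by
    rintro _ ⟨i, rfl⟩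
    have hi := h (Fin.castAdd l i) i.2
    refine ⟨⟨σ (Fin.castAdd l i), hi⟩, ?_⟩
    simp only [τ, Equiv.permCongr_apply, Equiv.symm_symm, finSumFinEquiv_apply_left,
      Equiv.eq_symm_apply]
    rfl
  obtain ⟨⟨α, β⟩, hαβ⟩ := Equiv.Perm.mem_sumCongrHom_range_of_perm_mapsTo_inl hτ
  refine ⟨α, β, ?_⟩
  rw [Perm.sumCongrHom_apply] at hαβ
  ext i
  simp [directSum, hαβ, τ]

lemma splitsAt_directSum_iff_of_le {j : ℕ} (hj : j ≤ k) :
    SplitsAt (directSum α β) j ↔ SplitsAt α j := by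
  constructor
  · intro h i hi
    simpa using h (Fin.castAdd l i) hi
  · intro h i hi
    induction i using Fin.addCases with
    | left i => simpa using h i hi
    | right i => simp at hi; omega

lemma SplitsAt.of_directSum_add {j : ℕ} (h : SplitsAt (directSum α β) (k + j)) :
    SplitsAt β j := by
  intro i hi
  simpa using h (Fin.natAdd k i) (by simpa using hi)

end SplitsAt

@[simp] lemma splitsAt_castPerm_iff {m n k : ℕ} (h : m = n) (σ : Perm (Fin m)) :
    SplitsAt (castPerm h σ) k ↔ SplitsAt σ k := by
  subst h; simp

lemma splitsAt_castPerm_directSum {n k l : ℕ} (e : k + l = n) (α : Perm (Fin k))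
    (β : Perm (Fin l)) : SplitsAt (castPerm e (directSum α β)) k :=
  (splitsAt_castPerm_iff e _).2 (splitsAt_directSum α β)

lemma SplitsAt.exists_castPerm_directSum_eq {n k : ℕ} {σ : Perm (Fin n)} (h : SplitsAt σ k)
    (hk : k ≤ n) : ∃ (α : Perm (Fin k)) (β : Perm (Fin (n - k))),
      castPerm (Nat.add_sub_cancel' hk) (directSum α β) = σ := by
  obtain ⟨α, β, hαβ⟩ := exists_directSum_eq
    ((splitsAt_castPerm_iff (Nat.add_sub_cancel' hk).symm σ).2 h)
  exact ⟨α, β, by simp [hαβ]⟩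

lemma SplitsAt.le_apply {n k : ℕ} {σ : Perm (Fin n)} (h : SplitsAt σ k) {i : Fin n}
    (hi : k ≤ i) : k ≤ σ i := by
  obtain ⟨α, β, rfl⟩ := h.exists_castPerm_directSum_eq (hi.trans i.2.le)
  have hi' : ((Fin.cast (Nat.add_sub_cancel' (hi.trans i.2.le)).symm i) : ℕ) = k + (i - k) := by
    simp; omega
  rw [castPerm_apply_val, show Fin.cast _ i = Fin.natAdd k ⟨i - k, by omega⟩ from Fin.ext hi',
    directSum_natAdd, Fin.val_natAdd]
  exact Nat.le_add_right _ _

lemma not_splitsAt_of_complement {n k k' : ℕ} {σ : Perm (Fin n)} (hk : 0 < k) (hkn : k < n)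
    (hk' : 0 < k') (hk'n : k' < n) (hσ : SplitsAt σ k) : ¬ SplitsAt σ.complement k' := by
  intro hτ
  have h₁ := hσ ⟨0, by omega⟩ hk
  have h₂ := hτ ⟨0, by omega⟩ hk'
  have h₃ := hσ.le_apply (i := ⟨n - 1, by omega⟩) (by simp; omega)
  have h₄ := hτ.le_apply (i := ⟨n - 1, by omega⟩) (by simp; omega)
  simp only [complement_apply_val] at h₂ h₄
  omega

/- Induction on `σ`: a cut strictly inside a block of `μ ⊕ ν` splits that block, and
`directSum_assoc` regroups the pieces; a skew sum has no cut. -/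
theorem Separable.of_castPerm_directSum_eq {n : ℕ} {σ : Perm (Fin n)} (hσ : Separable σ)
    {k l : ℕ} {α : Perm (Fin k)} {β : Perm (Fin l)} (e : k + l = n) (hk : 0 < k) (hl : 0 < l)
    (h : castPerm e (directSum α β) = σ) : Separable α ∧ Separable β := by
  induction hσ generalizing k l with
  | single => omega
  | @dsum a b μ ν hμ hν ihμ ihν =>
    have hsplit : SplitsAt (directSum μ ν) k := h ▸ splitsAt_castPerm_directSum e α β
    rcases lt_trichotomy k a with hka | rfl | hak
    · obtain ⟨c, rfl⟩ : ∃ c, a = k + c := ⟨a - k, by omega⟩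
      obtain rfl : l = c + b := by omega
      obtain ⟨α', γ, rfl⟩ :=
        exists_directSum_eq ((splitsAt_directSum_iff_of_le μ ν le_self_add).1 hsplit)
      obtain ⟨hα', hγ⟩ := ihμ rfl hk (by omega) (castPerm_refl _ _)
      have h' := congrArg (castPerm (Nat.add_assoc k c b)) h
      rw [directSum_assoc, castPerm_castPerm, castPerm_refl] at h'
      obtain ⟨rfl, rfl⟩ := directSum_inj.1 h'
      exact ⟨hα', hγ.dsum hν⟩
    · obtain rfl : l = b := by omega
      rw [castPerm_refl] at h
      obtain ⟨rfl, rfl⟩ := directSum_inj.1 h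
      exact ⟨hμ, hν⟩
    · obtain ⟨j, rfl⟩ : ∃ j, k = a + j := ⟨k - a, by omega⟩
      obtain rfl : b = j + l := by omega
      obtain ⟨δ, β', rfl⟩ := exists_directSum_eq (hsplit.of_directSum_add μ ν)
      obtain ⟨hδ, hβ'⟩ := ihν rfl (by omega) hl (castPerm_refl _ _)
      rw [← directSum_assoc] at h
      obtain ⟨rfl, rfl⟩ := directSum_inj.1 ((castPerm e).injective h)
      exact ⟨hμ.dsum hδ, hβ'⟩
  | @ssum a b μ ν hμ hν =>
    have hsplit : SplitsAt (skewSum μ ν) k := h ▸ splitsAt_castPerm_directSum e α β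
    have := hν.pos
    refine absurd ?_ (not_splitsAt_of_complement hk (by omega) hμ.pos (by omega) hsplit)
    rw [complement_skewSum]
    exact splitsAt_directSum _ _

def IsSumDecomposable {n : ℕ} (σ : Perm (Fin n)) : Prop :=
  ∃ k, 0 < k ∧ k < n ∧ SplitsAt σ k

lemma Separable.isSumDecomposable_or {n : ℕ} {σ : Perm (Fin n)} (hσ : Separable σ)
    (hn : 2 ≤ n) :
    IsSumDecomposable σ ∨ IsSumDecomposable σ.complement := by
  cases hσ with
  | single => omega
  | @dsum a b μ ν hμ hν =>
    exact .inl ⟨a, hμ.pos, by have := hν.pos; omega, splitsAt_directSum μ ν⟩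
  | @ssum a b μ ν hμ hν =>
    refine .inr ⟨a, hμ.pos, by have := hν.pos; omega, ?_⟩
    rw [complement_skewSum]
    exact splitsAt_directSum _ _

lemma IsSumDecomposable.not_complement {n : ℕ} {σ : Perm (Fin n)} (hσ : IsSumDecomposable σ) :
    ¬ IsSumDecomposable σ.complement := by
  obtain ⟨k, hk, hkn, hsplit⟩ := hσ
  rintro ⟨k', hk', hk'n, hsplit'⟩
  exact not_splitsAt_of_complement hk hkn hk' hk'n hsplit hsplit'

lemma le_of_castPerm_directSum_eq {n k l k' l' : ℕ} {α : Perm (Fin k)} {β : Perm (Fin l)}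
    {α' : Perm (Fin k')} {β' : Perm (Fin l')} {e : k + l = n} {e' : k' + l' = n}
    (hα' : ¬ IsSumDecomposable α') (hk : 0 < k)
    (h : castPerm e (directSum α β) = castPerm e' (directSum α' β')) : k' ≤ k := by
  by_contra! hk'
  refine hα' ⟨k, hk, hk', (splitsAt_directSum_iff_of_le α' β' hk'.le).1 ?_⟩
  rw [← splitsAt_castPerm_iff e', ← h]
  exact splitsAt_castPerm_directSum e α β

lemma Separable.exists_castPerm_directSum_eq {n : ℕ} {σ : Perm (Fin n)} (hσ : Separable σ)
    (hdec : IsSumDecomposable σ) :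
    ∃ k, ∃ hk : 0 < k ∧ k < n, ∃ (α : Perm (Fin k)) (β : Perm (Fin (n - k))),
      (Separable α ∧ ¬ IsSumDecomposable α) ∧ Separable β ∧
        castPerm (Nat.add_sub_cancel' hk.2.le) (directSum α β) = σ := by
  classical
  have hk := Nat.find_spec hdec
  obtain ⟨α, β, hαβ⟩ := hk.2.2.exists_castPerm_directSum_eq hk.2.1.le
  obtain ⟨hα, hβ⟩ := hσ.of_castPerm_directSum_eq _ hk.1 (by omega) hαβ
  refine ⟨_, ⟨hk.1, hk.2.1⟩, α, β, ⟨hα, ?_⟩, hβ, hαβ⟩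
  rintro ⟨j, hj, hjk, hsplit⟩
  refine Nat.find_min hdec hjk ⟨hj, by omega, ?_⟩
  rw [← hαβ, splitsAt_castPerm_iff, splitsAt_directSum_iff_of_le _ _ hjk.le]
  exact hsplit

section Counting

open scoped Classical

noncomputable def separables (n : ℕ) : Finset (Perm (Fin n)) := {σ | Separable σ}

noncomputable def sumDecomposables (n : ℕ) : Finset (Perm (Fin n)) :=
  {σ ∈ separables n | IsSumDecomposable σ}

noncomputable def sumIndecomposables (n : ℕ) : Finset (Perm (Fin n)) :=
  {σ ∈ separables n | ¬ IsSumDecomposable σ}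

@[simp] lemma mem_sumDecomposables {n : ℕ} {σ : Perm (Fin n)} :
    σ ∈ sumDecomposables n ↔ Separable σ ∧ IsSumDecomposable σ := by
  simp [sumDecomposables, separables]

@[simp] lemma mem_sumIndecomposables {n : ℕ} {σ : Perm (Fin n)} :
    σ ∈ sumIndecomposables n ↔ Separable σ ∧ ¬ IsSumDecomposable σ := by
  simp [sumIndecomposables, separables]

@[simp] lemma mem_separables {n : ℕ} {σ : Perm (Fin n)} :
    σ ∈ separables n ↔ Separable σ := by
  simp [separables]

lemma numSep_eq_card (n : ℕ) : numSep n = #(separables n) := by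
  rw [numSep, Nat.card_eq_fintype_card, Fintype.card_subtype, separables]

lemma card_sumDecomposables_add_card_sumIndecomposables (n : ℕ) :
    #(sumDecomposables n) + #(sumIndecomposables n) = numSep n := by
  rw [numSep_eq_card]
  exact card_filter_add_card_filter_not _

lemma card_sumIndecomposables_one : #(sumIndecomposables 1) = 1 := by
  rw [card_eq_one]
  refine ⟨1, eq_singleton_iff_unique_mem.2 ⟨?_, fun σ _ => Subsingleton.elim _ _⟩⟩
  rw [mem_sumIndecomposables]
  exact ⟨.single, fun ⟨k, hk, hk1, _⟩ => by omega⟩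

lemma card_sumIndecomposables_eq {n : ℕ} (hn : 2 ≤ n) :
    #(sumIndecomposables n) = #(sumDecomposables n) := by
  refine card_nbij' Perm.complement Perm.complement ?_ ?_ (fun σ _ => complement_complement σ)
    (fun σ _ => complement_complement σ)
  · intro σ hσ
    simp only [mem_coe, mem_sumIndecomposables, mem_sumDecomposables] at hσ ⊢
    exact ⟨hσ.1.complement, (hσ.1.isSumDecomposable_or hn).resolve_left hσ.2⟩
  · intro σ hσ
    simp only [mem_coe, mem_sumIndecomposables, mem_sumDecomposables] at hσ ⊢
    exact ⟨hσ.1.complement, hσ.2.not_complement⟩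

lemma card_sumDecomposables (n : ℕ) :
    #(sumDecomposables n) = ∑ k ∈ Ico 1 n, #(sumIndecomposables k) * numSep (n - k) := by
  simp_rw [numSep_eq_card, ← card_product]
  rw [← card_sigma]
  symm
  refine card_bij (fun x hx => castPerm (Nat.add_sub_cancel' ?_) (directSum x.2.1 x.2.2))
    ?_ ?_ ?_
  · simp only [mem_sigma, mem_Ico] at hx
    omega
  · rintro ⟨k, α, β⟩ hx
    simp only [mem_sigma, mem_Ico, mem_product, mem_sumIndecomposables, mem_separables] at hx
    simp only [mem_sumDecomposables, separable_castPerm_iff]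
    exact ⟨hx.2.1.1.dsum hx.2.2, k, by omega, by omega, splitsAt_castPerm_directSum _ α β⟩
  · rintro ⟨k, α, β⟩ hx ⟨k', α', β'⟩ hx' h
    simp only [mem_sigma, mem_Ico, mem_product, mem_sumIndecomposables, mem_separables] at hx hx'
    obtain rfl : k = k' :=
      le_antisymm (le_of_castPerm_directSum_eq hx.2.1.2 hx'.1.1 h.symm)
        (le_of_castPerm_directSum_eq hx'.2.1.2 hx.1.1 h)
    obtain ⟨rfl, rfl⟩ := directSum_inj.1 ((castPerm _).injective h)
    rfl
  · intro σ hσ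
    rw [mem_sumDecomposables] at hσ
    obtain ⟨k, hk, α, β, hα, hβ, rfl⟩ := hσ.1.exists_castPerm_directSum_eq hσ.2
    refine ⟨⟨k, α, β⟩, ?_, rfl⟩
    simp only [mem_sigma, mem_Ico, mem_product, mem_sumIndecomposables, mem_separables]
    exact ⟨⟨hk.1, hk.2⟩, hα, hβ⟩

lemma two_mul_card_sumIndecomposables (k : ℕ) :
    2 * #(sumIndecomposables (k + 1)) = numSep (k + 1) + if k = 0 then 1 else 0 := by
  rw [← card_sumDecomposables_add_card_sumIndecomposables]
  rcases k with _ | k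
  · simp [card_sumDecomposables, card_sumIndecomposables_one]
  · rw [card_sumIndecomposables_eq (by omega)]
    simp [two_mul]

end Counting

theorem numSep_add_two (n : ℕ) :
    numSep (n + 2) =
      numSep (n + 1) + ∑ k ∈ range (n + 1), numSep (k + 1) * numSep (n + 1 - k) := by
  calc numSep (n + 2) = 2 * #(sumDecomposables (n + 2)) := by
        rw [← card_sumDecomposables_add_card_sumIndecomposables,
          card_sumIndecomposables_eq (by omega), two_mul]
    _ = ∑ k ∈ range (n + 1), 2 * #(sumIndecomposables (k + 1)) * numSep (n + 1 - k) := by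
        rw [card_sumDecomposables, sum_Ico_eq_sum_range, mul_sum]
        refine sum_congr rfl fun k _ => ?_
        rw [add_comm 1 k, show n + 2 - (k + 1) = n + 1 - k by omega, mul_assoc]
    _ = _ := by
        simp_rw [two_mul_card_sumIndecomposables, add_mul, sum_add_distrib]
        simp [add_comm]

section QuadraticRecurrence

variable {b : ℕ → ℝ} {c : ℝ}

lemma sum_range_sum_mul_le_sq (hb : ∀ n, 0 ≤ b n) (N : ℕ) :
    ∑ n ∈ range N, ∑ k ∈ range (n + 1), b k * b (n - k) ≤
      (∑ n ∈ range N, b n) ^ 2 := by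
  rw [sum_range_diag_flip N fun i j => b i * b j, sq, sum_mul_sum]
  refine sum_le_sum fun i _ => sum_le_sum_of_subset_of_nonneg
    (range_subset_range.2 (Nat.sub_le N i)) fun j _ _ => mul_nonneg (hb i) (hb j)

lemma sum_range_succ_eq_of_rec
    (hrec : ∀ n, b (n + 1) = c * b n + ∑ k ∈ range (n + 1), b k * b (n - k)) (N : ℕ) :
    ∑ n ∈ range (N + 1), b n = b 0 + c * ∑ n ∈ range N, b n +
      ∑ n ∈ range N, ∑ k ∈ range (n + 1), b k * b (n - k) := by
  rw [sum_range_succ', add_comm, sum_congr rfl fun n _ => hrec n, sum_add_distrib, mul_sum,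
    add_assoc]

lemma sum_range_le_of_rec
    (hrec : ∀ n, b (n + 1) = c * b n + ∑ k ∈ range (n + 1), b k * b (n - k))
    (hb : ∀ n, 0 ≤ b n) (hc : 0 ≤ c) {L : ℝ} (hL : 0 ≤ L)
    (hfix : b 0 + c * L + L ^ 2 ≤ L) (N : ℕ) : ∑ n ∈ range N, b n ≤ L := by
  induction N with
  | zero => simpa using hL
  | succ N ih =>
    have hT : 0 ≤ ∑ n ∈ range N, b n := sum_nonneg fun n _ => hb n
    calc ∑ n ∈ range (N + 1), b n
        ≤ b 0 + c * ∑ n ∈ range N, b n + (∑ n ∈ range N, b n) ^ 2 := by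
          rw [sum_range_succ_eq_of_rec hrec]
          gcongr
          exact sum_range_sum_mul_le_sq hb N
      _ ≤ b 0 + c * L + L ^ 2 := by gcongr
      _ ≤ L := hfix

lemma tsum_eq_of_rec
    (hrec : ∀ n, b (n + 1) = c * b n + ∑ k ∈ range (n + 1), b k * b (n - k))
    (hb : ∀ n, 0 ≤ b n) (hs : Summable b) :
    ∑' n, b n = b 0 + c * ∑' n, b n + (∑' n, b n) ^ 2 := by
  have hprod : Summable fun p : ℕ × ℕ => b p.1 * b p.2 := hs.mul_of_nonneg hs hb hb
  calc ∑' n, b n = b 0 + ∑' n, (c * b n + ∑ k ∈ range (n + 1), b k * b (n - k)) := by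
        rw [hs.tsum_eq_zero_add, tsum_congr hrec]
    _ = b 0 + c * ∑' n, b n + ∑' n, ∑ k ∈ range (n + 1), b k * b (n - k) := by
        rw [(hs.mul_left c).tsum_add (summable_sum_mul_range_of_summable_mul hprod),
          tsum_mul_left, add_assoc]
    _ = _ := by rw [sq, hs.tsum_mul_tsum_eq_tsum_sum_range hs hprod]

end QuadraticRecurrence

lemma numSep_one : numSep 1 = 1 := by
  have h := two_mul_card_sumIndecomposables 0
  rw [zero_add, card_sumIndecomposables_one, if_pos rfl] at h
  omega

lemma numSep_mul_pow_add_two (x : ℝ) (n : ℕ) :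
    (numSep (n + 2) : ℝ) * x ^ (n + 2) = x * ((numSep (n + 1) : ℝ) * x ^ (n + 1)) +
      ∑ k ∈ range (n + 1), ((numSep (k + 1) : ℝ) * x ^ (k + 1)) *
        ((numSep (n - k + 1) : ℝ) * x ^ (n - k + 1)) := by
  rw [numSep_add_two]
  push_cast
  rw [add_mul, sum_mul]
  congr 1
  · ring
  · refine sum_congr rfl fun k hk => ?_
    rw [show n + 1 - k = n - k + 1 by have := mem_range.1 hk; omega,
      show n + 2 = (k + 1) + (n - k + 1) by have := mem_range.1 hk; omega, pow_add]
    ring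

/-- `P(R=k) = s_k (3-2√2)^k/(√2-1)`, `k ≥ 1`, defines a probability distribution on the
positive integers: `∑_{k=1}^∞ s_k (3-2√2)^k = √2 - 1`. -/
theorem R_dist_sums_to_one :
    (∀ k : ℕ, 1 ≤ k → 0 ≤ (numSep k : ℝ) * (3 - 2 * Real.sqrt 2) ^ k / (Real.sqrt 2 - 1)) ∧
    ∑' k : ℕ, (numSep (k + 1) : ℝ) * (3 - 2 * Real.sqrt 2) ^ (k + 1) = Real.sqrt 2 - 1 := by
  set x := 3 - 2 * Real.sqrt 2
  set b : ℕ → ℝ := fun n => (numSep (n + 1) : ℝ) * x ^ (n + 1)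
  have hsqrt : Real.sqrt 2 ^ 2 = 2 := Real.sq_sqrt zero_le_two
  have hx : 0 ≤ x := by nlinarith [Real.sqrt_nonneg 2]
  have hL : 0 ≤ Real.sqrt 2 - 1 := by nlinarith [Real.sqrt_nonneg 2]
  have hb : ∀ n, 0 ≤ b n := fun n => by positivity
  have hb0 : b 0 = x := by simp [b, numSep_one]
  have hrec : ∀ n, b (n + 1) = x * b n + ∑ k ∈ range (n + 1), b k * b (n - k) :=
    numSep_mul_pow_add_two x
  have hs : Summable b := summable_of_sum_range_le hb
    (sum_range_le_of_rec hrec hb hx hL (by rw [hb0]; nlinarith))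
  refine ⟨fun k _ => by positivity, ?_⟩
  have hS := tsum_eq_of_rec hrec hb hs
  rw [hb0] at hS
  -- `x = (√2 - 1)²` and `1 - x = 2 (√2 - 1)`, so `t = x + x t + t²` has a double root.
  have hsq : (∑' n, b n - (Real.sqrt 2 - 1)) ^ 2 = 0 := by linear_combination (-1) * hS + hsqrt
  exact sub_eq_zero.1 (pow_eq_zero_iff two_ne_zero |>.1 hsq)
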